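/- Conversely, if two words u, v ∈ Σ* have equal projections onto Σ_p for every process p ∈ P, then u ∼_I v (Projection Lemma for Mazurkiewicz traces, for the independence relation induced by a distributed alphabet). -/

import Mathlib

/-!
Induction on `u`. For `u = a :: u'`, pick `p ∈ dom a`: then `π_p v` starts with `a`. Cut `v`
before its first letter `b` sharing a process `q` with `a`; the prefix is independent of `a`,
so `π_q v` starts with `b`, whence `b = a`. Commuting `a` to the front preserves all projections
(projections are trace invariants), and cancelling `a` leaves the hypothesis for `u'`.
-/

/-- Trace equivalence: the congruence on `Act*` generated by swapping
adjacent letters with disjoint domains. -/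
inductive TraceEq {Act P : Type} (dom : Act → Finset P) : List Act → List Act → Prop
  | refl (u : List Act) : TraceEq dom u u
  | symm {u v : List Act} : TraceEq dom u v → TraceEq dom v u
  | trans {u v w : List Act} : TraceEq dom u v → TraceEq dom v w → TraceEq dom u w
  | swap (u v : List Act) (a b : Act) (h : Disjoint (dom a) (dom b)) :
      TraceEq dom (u ++ a :: b :: v) (u ++ b :: a :: v)

variable {Act P : Type} {dom : Act → Finset P}

namespace TraceEq

theorem cons (c : Act) {u v : List Act} (h : TraceEq dom u v) :
    TraceEq dom (c :: u) (c :: v) := by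
  induction h with
  | refl u => exact refl _
  | symm _ ih => exact ih.symm
  | trans _ _ ih₁ ih₂ => exact ih₁.trans ih₂
  | swap u v a b hab => exact swap (c :: u) v a b hab

theorem cons_append_of_forall_disjoint (a : Act) {w : List Act} (t : List Act)
    (hw : ∀ b ∈ w, Disjoint (dom a) (dom b)) : TraceEq dom (a :: (w ++ t)) (w ++ a :: t) := by
  induction w with
  | nil => exact refl _
  | cons c w ih =>
    exact (swap [] (w ++ t) a c (hw c List.mem_cons_self)).trans
      ((ih fun b hb => hw b (List.mem_cons_of_mem c hb)).cons c)

end TraceEq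

section Projection

variable [DecidableEq P]

variable (dom) in
/-- The projection `π_p` onto `Σ_p`. -/
def proj (p : P) (w : List Act) : List Act :=
  w.filter fun a => decide (p ∈ dom a)

variable {p : P} {a : Act} {u v w : List Act}

@[simp]
theorem proj_nil : proj dom p [] = [] := rfl

@[simp]
theorem proj_append : proj dom p (u ++ v) = proj dom p u ++ proj dom p v :=
  List.filter_append u v

theorem proj_cons_of_mem (h : p ∈ dom a) : proj dom p (a :: w) = a :: proj dom p w := by
  simp [proj, h]

theorem proj_cons_of_notMem (h : p ∉ dom a) : proj dom p (a :: w) = proj dom p w := by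
  simp [proj, h]

theorem proj_eq_nil_of_forall_disjoint (hp : p ∈ dom a)
    (hw : ∀ b ∈ w, Disjoint (dom a) (dom b)) : proj dom p w = [] :=
  List.filter_eq_nil_iff.mpr fun b hb => by
    simpa using Finset.disjoint_left.mp (hw b hb) hp

theorem proj_cons_cancel (h : proj dom p (a :: u) = proj dom p (a :: v)) :
    proj dom p u = proj dom p v := by
  by_cases hp : p ∈ dom a
  · simpa [proj_cons_of_mem hp] using h
  · simpa [proj_cons_of_notMem hp] using h

theorem TraceEq.proj_eq (h : TraceEq dom u v) (p : P) : proj dom p u = proj dom p v := by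
  induction h with
  | refl => rfl
  | symm _ ih => exact ih.symm
  | trans _ _ ih₁ ih₂ => exact ih₁.trans ih₂
  | swap u v a b hab =>
    by_cases ha : p ∈ dom a <;> by_cases hb : p ∈ dom b
    · exact absurd hb (Finset.disjoint_left.mp hab ha)
    all_goals simp [proj, ha, hb]

theorem exists_eq_append_cons_of_forall_proj_eq (ha : (dom a).Nonempty)
    (h : ∀ p, proj dom p (a :: u) = proj dom p v) :
    ∃ v₁ v₂, v = v₁ ++ a :: v₂ ∧ ∀ b ∈ v₁, Disjoint (dom a) (dom b) := by
  set indep : Act → Bool := fun b => decide (Disjoint (dom a) (dom b))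
  have hv₁ : ∀ b ∈ v.takeWhile indep, Disjoint (dom a) (dom b) := fun b hb => by
    simpa [indep] using List.mem_takeWhile_imp hb
  have hsplit := (List.takeWhile_append_dropWhile (p := indep) (l := v)).symm
  have hproj : ∀ q ∈ dom a, proj dom q (a :: u) = proj dom q (v.dropWhile indep) := fun q hq => by
    rw [h q, hsplit, proj_append, proj_eq_nil_of_forall_disjoint hq hv₁, List.nil_append, ← hsplit]
  obtain ⟨p, hp⟩ := ha
  rcases hr : v.dropWhile indep with _ | ⟨b, v₂⟩
  · simpa [hr, proj_cons_of_mem hp] using hproj p hp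
  have hab : ¬ Disjoint (dom a) (dom b) := by
    simpa [hr, indep] using List.head_dropWhile_not indep (l := v) (by simp [hr])
  obtain ⟨q, hqa, hqb⟩ := Finset.not_disjoint_iff.mp hab
  have hba : b = a := by
    simpa [hr, proj_cons_of_mem hqa, proj_cons_of_mem hqb] using
      congrArg List.head? (hproj q hqa).symm
  exact ⟨_, v₂, hba ▸ hr ▸ hsplit, hv₁⟩

theorem traceEq_of_forall_proj_eq (hne : ∀ a, (dom a).Nonempty)
    (h : ∀ p, proj dom p u = proj dom p v) : TraceEq dom u v := by
  induction u generalizing v with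
  | nil =>
    cases v with
    | nil => exact .refl []
    | cons b v =>
      obtain ⟨p, hp⟩ := hne b
      simpa [proj_cons_of_mem hp] using h p
  | cons a u ih =>
    obtain ⟨v₁, v₂, rfl, hv₁⟩ := exists_eq_append_cons_of_forall_proj_eq (hne a) h
    have hbubble := TraceEq.cons_append_of_forall_disjoint a v₂ hv₁
    have hu : ∀ p, proj dom p u = proj dom p (v₁ ++ v₂) := fun p =>
      proj_cons_cancel ((h p).trans (hbubble.proj_eq p).symm)
    exact ((ih hu).cons a).trans hbubble

end Projection

theorem stmt7_general {Act P : Type} [DecidableEq P] (dom : Act → Finset P)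
    (hne : ∀ a, (dom a).Nonempty) (u v : List Act)
    (h : ∀ p : P, u.filter (fun a => decide (p ∈ dom a)) =
      v.filter (fun a => decide (p ∈ dom a))) :
    TraceEq dom u v :=
  traceEq_of_forall_proj_eq hne h

/-- Projection Lemma: over a distributed alphabet (finitely many processes,
nonempty domains), two words with equal projections onto every process
alphabet `Σ_p` are trace equivalent. -/
theorem stmt7 {Act P : Type} [Fintype P] [DecidableEq P] (dom : Act → Finset P)
    (hne : ∀ a, (dom a).Nonempty) (u v : List Act)
    (h : ∀ p : P, u.filter (fun a => decide (p ∈ dom a)) =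
      v.filter (fun a => decide (p ∈ dom a))) :
    TraceEq dom u v :=
  stmt7_general dom hne u v h
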